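/- Let G be a directed graph with source s, t a vertex, and H a graph obtained from G by the out-degree-reducing transformation (edge subdivision plus binary-tree vertex expansion). If H* is a (k+f−1)-FTRS of H, then the subgraph G* of G obtained by keeping an in-edge (w,t) of t if and only if (r_{w,t}, t) ∈ E(H*), and keeping all other edges of G, is a (k+f−1)-FTRS of G, and t has the same in-degree in G* and H*. -/

import Mathlib

open Finset

/-- `p` is a nonempty directed path/walk (as a list of edges) from `s` to `t`
using only edges of `G`. -/
def IsPath {V : Type*} (G : Finset (V × V)) (s t : V) (p : List (V × V)) : Prop :=
  p ≠ [] ∧ (∀ e ∈ p, e ∈ G) ∧ List.Chain' (fun e f => e.2 = f.1) p ∧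
    p.head?.map Prod.fst = some s ∧ p.getLast?.map Prod.snd = some t

/-- `G` contains `r` pairwise edge-disjoint paths from `s` to `t` (unit capacities). -/
def EDP {V : Type*} (G : Finset (V × V)) (s t : V) (r : ℕ) : Prop :=
  ∃ ps : Fin r → List (V × V), (∀ i, IsPath G s t (ps i)) ∧
    ∀ i j, i ≠ j → ∀ e, e ∈ ps i → e ∉ ps j

/-- Max-flow with unit capacities: the maximum number of edge-disjoint `s`-`t` paths. -/
noncomputable def maxFlow {V : Type*} (G : Finset (V × V)) (s t : V) : ℕ :=
  sSup {r | EDP G s t r}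

/-- Directed reachability in the edge set `G`. -/
def Reach {V : Type*} (G : Finset (V × V)) (s t : V) : Prop :=
  Relation.ReflTransGen (fun a b => (a, b) ∈ G) s t

def inEdges {V : Type*} [DecidableEq V] (G : Finset (V × V)) (v : V) : Finset (V × V) :=
  G.filter fun e => e.2 = v

def outDeg {V : Type*} [DecidableEq V] (G : Finset (V × V)) (v : V) : ℕ :=
  (G.filter fun e => e.1 = v).card

/-- `H` is a `(lam, k)` fault-tolerant bounded-flow-preserver of `G` w.r.t. source `s`:
for every set `F` of at most `k` failed edges and every vertex `t`, the `s`-`t` max-flow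
of `H \ F` equals that of `G \ F` whenever the latter is at most `lam`, and is at least
`lam` otherwise. -/
def IsFTBFP {V : Type*} [DecidableEq V] (G H : Finset (V × V)) (s : V) (lam k : ℕ) : Prop :=
  H ⊆ G ∧ ∀ F : Finset (V × V), F.card ≤ k → ∀ t : V,
    (maxFlow (G \ F) s t ≤ lam → maxFlow (H \ F) s t = maxFlow (G \ F) s t) ∧
    (lam < maxFlow (G \ F) s t → lam ≤ maxFlow (H \ F) s t)

/-- `H` is a `j`-fault-tolerant reachability subgraph of `G` w.r.t. source `s`. -/
def IsFTRS {V : Type*} [DecidableEq V] (G H : Finset (V × V)) (s : V) (j : ℕ) : Prop :=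
  H ⊆ G ∧ ∀ F : Finset (V × V), F.card ≤ j → ∀ t : V,
    (Reach (H \ F) s t ↔ Reach (G \ F) s t)

def IsCut {V : Type*} (A : Finset V) (s t : V) : Prop := s ∈ A ∧ t ∉ A

/-- Number of edges of `G` from `A` to its complement. -/
def cutVal {V : Type*} [DecidableEq V] (G : Finset (V × V)) (A : Finset V) : ℕ :=
  (G.filter fun e => e.1 ∈ A ∧ e.2 ∉ A).card

def IsMinCut {V : Type*} [DecidableEq V] (G : Finset (V × V)) (s t : V) (A : Finset V) : Prop :=
  IsCut A s t ∧ ∀ B : Finset V, IsCut B s t → cutVal G A ≤ cutVal G B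

def IsCutS {V : Type*} (S : Finset V) (t : V) (A : Finset V) : Prop := S ⊆ A ∧ t ∉ A

def IsMinCutS {V : Type*} [DecidableEq V] (G : Finset (V × V)) (S : Finset V) (t : V)
    (A : Finset V) : Prop :=
  IsCutS S t A ∧ ∀ B : Finset V, IsCutS S t B → cutVal G A ≤ cutVal G B

/-- Farthest min-cut: the min-cut whose source side contains the source side of
every min-cut. -/
def IsFMC {V : Type*} [DecidableEq V] (G : Finset (V × V)) (S : Finset V) (t : V)
    (A : Finset V) : Prop :=
  IsMinCutS G S t A ∧ ∀ B : Finset V, IsMinCutS G S t B → B ⊆ A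

/-- Vertices outside `A` with an in-edge from `A`. -/
def outSet {V : Type*} [DecidableEq V] (G : Finset (V × V)) (A : Finset V) : Finset V :=
  (G.filter fun e => e.1 ∈ A ∧ e.2 ∉ A).image Prod.snd

open scoped Classical

/-- Vertices of the out-degree-reducing transformation of a graph on `V`:
original vertices, the subdivision vertices `ℓ_{x,y}` (`false`) and `r_{x,y}`
(`true`) of each edge `(x,y)`, and the spine nodes `(x, y, z)` of the binary tree
(a caterpillar, ordered by the linear order on `V`) replacing vertex `y` for its
in-neighbour `x`, one spine node per out-neighbour `z` of `y`. -/
abbrev TW (V : Type*) := V ⊕ ((V × V) × Bool) ⊕ (V × V × V)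

/-- Edges of the transformed graph: `s → ℓ_{s,y}`; `ℓ_{x,y} → r_{x,y}`;
`r_{x,y} → y` when `y ∈ {s,t}`; for `y ∉ {s,t}`, `r_{x,y}` enters the spine of the
binary tree `B_{x,y}` at the smallest out-neighbour of `y`, each spine node
`(x,y,z)` has an edge to the leaf `ℓ_{y,z}` and to the next spine node. -/
def transEdge {V : Type*} [LinearOrder V] (G : Finset (V × V)) (s t : V) :
    TW V × TW V → Prop := fun e =>
  match e with
  | (Sum.inl a, Sum.inr (Sum.inl ((x, y), false))) =>
      a = s ∧ x = s ∧ (s, y) ∈ G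
  | (Sum.inr (Sum.inl ((x, y), false)), Sum.inr (Sum.inl ((x2, y2), true))) =>
      x = x2 ∧ y = y2 ∧ (x, y) ∈ G
  | (Sum.inr (Sum.inl ((x, y), true)), Sum.inl b) =>
      b = y ∧ (y = s ∨ y = t) ∧ (x, y) ∈ G
  | (Sum.inr (Sum.inl ((x, y), true)), Sum.inr (Sum.inr (x2, y2, z))) =>
      x = x2 ∧ y = y2 ∧ y ≠ s ∧ y ≠ t ∧ (x, y) ∈ G ∧
        (y, z) ∈ G ∧ ∀ z2, (y, z2) ∈ G → z ≤ z2
  | (Sum.inr (Sum.inr (x, y, z)), Sum.inr (Sum.inl ((y2, z2), false))) =>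
      y = y2 ∧ z = z2 ∧ y ≠ s ∧ y ≠ t ∧ (x, y) ∈ G ∧ (y, z) ∈ G
  | (Sum.inr (Sum.inr (x, y, z)), Sum.inr (Sum.inr (x2, y2, z2))) =>
      x = x2 ∧ y = y2 ∧ y ≠ s ∧ y ≠ t ∧ (x, y) ∈ G ∧
        (y, z) ∈ G ∧ (y, z2) ∈ G ∧ z < z2 ∧ ∀ w, (y, w) ∈ G → z < w → z2 ≤ w
  | _ => False

noncomputable def transGraph {V : Type*} [Fintype V] [LinearOrder V]
    (G : Finset (V × V)) (s t : V) : Finset (TW V × TW V) :=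
  Finset.univ.filter (transEdge G s t)

/-! An `s`-`t` path of `G \ F` becomes an `s`-`t` path of `H` avoiding the subdivision edges
`(ℓ_e, r_e)`, `e ∈ F`: each edge `(x,y)` of the path is replaced by `ℓ_{x,y} → r_{x,y}` followed
by a descent along the spine of the tree of `y` to the leaf `ℓ_{y,z}` of the next edge. Since
`H*` is an FTRS and at most `|F|` edges of `H` fail, `H*` still has such a path. Conversely, every
vertex of `H` sits on an edge or in the tree of a vertex of `G`, and projecting a path of `H*`
onto these gives a path of `G*`: the edge `(x,y)` is kept in `G*` when `y ≠ t`, and when `y = t`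
precisely because the path used `r_{x,t} → t ∈ H*`. The same correspondence
`(w,t) ↦ (r_{w,t}, t)` matches the in-edges of `t` in `G*` and `H*`. -/

lemma reach_mono {W : Type*} {A B : Finset (W × W)} (hAB : A ⊆ B) {a b : W}
    (h : Reach A a b) : Reach B a b :=
  Relation.ReflTransGen.mono (fun _ _ hab => hAB hab) _ _ h

lemma reach_of_reach_target {W : Type*} {A B : Finset (W × W)} {s t : W}
    (hBA : ∀ e ∈ B, e.2 ≠ t → e ∈ A) (ht : Reach B s t → Reach A s t) {u : W}
    (hu : Reach B s u) : Reach A s u := by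
  induction hu with
  | refl => exact .refl
  | @tail b c hb hbc ih =>
    by_cases hct : c = t
    · subst hct
      exact ht (hb.tail hbc)
    · exact ih.tail (hBA _ hbc hct)

section Transformation

variable {V : Type*}

abbrev TW.ell (e : V × V) : TW V := Sum.inr (Sum.inl (e, false))

abbrev TW.r (e : V × V) : TW V := Sum.inr (Sum.inl (e, true))

abbrev TW.node (x y z : V) : TW V := Sum.inr (Sum.inr (x, y, z))

def subdivEdge (e : V × V) : TW V × TW V := (TW.ell e, TW.r e)

variable [LinearOrder V] {G F : Finset (V × V)} {s t : V}

/-- The graph `G*` obtained from `H*`. -/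
noncomputable def pullback (G : Finset (V × V)) (t : V) (Hstar : Finset (TW V × TW V)) :
    Finset (V × V) :=
  G.filter fun e => e.2 = t → (TW.r (e.1, t), Sum.inl t) ∈ Hstar

lemma mem_pullback {Hstar : Finset (TW V × TW V)} {e : V × V} :
    e ∈ pullback G t Hstar ↔ e ∈ G ∧ (e.2 = t → (TW.r (e.1, t), Sum.inl t) ∈ Hstar) :=
  Finset.mem_filter

lemma pullback_subset (Hstar : Finset (TW V × TW V)) : pullback G t Hstar ⊆ G :=
  Finset.filter_subset _ _

lemma mem_pullback_sdiff_of_ne {Hstar : Finset (TW V × TW V)} {e : V × V} (he : e ∈ G \ F)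
    (het : e.2 ≠ t) : e ∈ pullback G t Hstar \ F :=
  Finset.mem_sdiff.mpr
    ⟨mem_pullback.mpr ⟨(Finset.mem_sdiff.mp he).1, fun h => absurd h het⟩,
      (Finset.mem_sdiff.mp he).2⟩

/-- The `G`-vertex an `H`-vertex belongs to (the tail `x` for `ℓ_{x,y}`, `r_{x,y}`; `y` for the
tree of `y`) is reachable in `Gs \ F`; at `r_{x,y}` the edge `(x,y)` has moreover survived. -/
def ShadowReach (Gs F : Finset (V × V)) (s : V) : TW V → Prop
  | Sum.inl v => Reach (Gs \ F) s v
  | Sum.inr (Sum.inl ((x, _), false)) => Reach (Gs \ F) s x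
  | Sum.inr (Sum.inl ((x, y), true)) => Reach (Gs \ F) s x ∧ (x, y) ∉ F
  | Sum.inr (Sum.inr (_, y, _)) => Reach (Gs \ F) s y

-- with the default bound, `DecidableEq (TW V × TW V)` is too large to synthesize structurally and
-- `Classical.propDecidable` is found instead, which is not the instance `IsFTRS` uses
set_option synthInstance.maxSize 512

variable [Fintype V]

lemma mem_transGraph {e : TW V × TW V} : e ∈ transGraph G s t ↔ transEdge G s t e := by
  simp [transGraph]

lemma mem_transGraph_sdiff {e : TW V × TW V} (he : transEdge G s t e)
    (hne : ∀ a, subdivEdge a ≠ e) : e ∈ transGraph G s t \ F.image subdivEdge := by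
  simpa [mem_transGraph, he] using fun a _ => hne a

lemma subdivEdge_mem_transGraph_sdiff {e : V × V} (he : e ∈ G \ F) :
    subdivEdge e ∈ transGraph G s t \ F.image subdivEdge := by
  obtain ⟨heG, heF⟩ := Finset.mem_sdiff.mp he
  simpa [mem_transGraph, subdivEdge, heG, transEdge] using heF

lemma reach_spine {x y : V} (hys : y ≠ s) (hyt : y ≠ t) (hxy : (x, y) ∈ G) {z : V}
    (hz : (y, z) ∈ G) :
    Reach (transGraph G s t \ F.image subdivEdge) (TW.r (x, y)) (TW.node x y z) := by
  induction z using WellFoundedLT.induction with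
  | _ z ih =>
  by_cases hmin : ∀ w, (y, w) ∈ G → z ≤ w
  · exact .single <| mem_transGraph_sdiff ⟨rfl, rfl, hys, hyt, hxy, hz, hmin⟩
      (by simp [subdivEdge])
  push Not at hmin
  obtain ⟨w, hw, hwz⟩ := hmin
  -- the spine node preceding `(x, y, z)` is that of the largest out-neighbour of `y` below `z`
  obtain ⟨z', hz', hmax⟩ := (Finset.univ.filter fun w => (y, w) ∈ G ∧ w < z).exists_max_image id
    ⟨w, by simp [hw, hwz]⟩
  simp only [Finset.mem_filter, Finset.mem_univ, true_and, id] at hz' hmax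
  have hnext : ∀ w, (y, w) ∈ G → z' < w → z ≤ w := fun w hw hz'w =>
    le_of_not_gt fun hwz => (hmax w ⟨hw, hwz⟩).not_gt hz'w
  exact (ih z' hz'.2 hz'.1).tail <| mem_transGraph_sdiff
    ⟨rfl, rfl, hys, hyt, hxy, hz'.1, hz, hz'.2, hnext⟩ (by simp [subdivEdge])

lemma reach_transGraph_of_reach (h : Reach (G \ F) s t) :
    Reach (transGraph G s t \ F.image subdivEdge) (Sum.inl s) (Sum.inl t) := by
  set H := transGraph G s t \ F.image subdivEdge
  let leavesReached (v : V) := ∀ z, (v, z) ∈ G → Reach H (Sum.inl s) (TW.ell (v, z))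
  have leaves_source : leavesReached s := fun z hz =>
    .single <| mem_transGraph_sdiff ⟨rfl, rfl, hz⟩ (by simp [subdivEdge])
  have step : ∀ b c, leavesReached b → (b, c) ∈ G \ F →
      Reach H (Sum.inl s) (Sum.inl t) ∨ (c ≠ t ∧ leavesReached c) := by
    intro b c hb hbc
    have hbcG := (Finset.mem_sdiff.mp hbc).1
    have hr : Reach H (Sum.inl s) (TW.r (b, c)) :=
      (hb c hbcG).tail (subdivEdge_mem_transGraph_sdiff hbc)
    by_cases hct : c = t
    · subst hct
      exact .inl <| hr.tail <| mem_transGraph_sdiff ⟨rfl, .inr rfl, hbcG⟩ (by simp [subdivEdge])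
    by_cases hcs : c = s
    · exact .inr ⟨hct, hcs ▸ leaves_source⟩
    refine .inr ⟨hct, fun z hz => (hr.trans (reach_spine hcs hct hbcG hz)).tail ?_⟩
    exact mem_transGraph_sdiff ⟨rfl, rfl, hcs, hct, hbcG, hz⟩ (by simp [subdivEdge])
  have main : ∀ v, Reach (G \ F) s v →
      Reach H (Sum.inl s) (Sum.inl t) ∨ (v ≠ t ∧ leavesReached v) := by
    intro v hv
    induction hv with
    | refl =>
      by_cases hst : s = t
      · exact .inl (hst ▸ .refl)
      · exact .inr ⟨hst, leaves_source⟩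
    | tail _ hbc ih => exact ih.elim .inl fun hb => step _ _ hb.2 hbc
  exact (main t h).resolve_right fun h => h.1 rfl

lemma shadowReach_step {Hstar : Finset (TW V × TW V)} (hsub : Hstar ⊆ transGraph G s t)
    {b c : TW V} (hb : ShadowReach (pullback G t Hstar) F s b)
    (hbc : (b, c) ∈ Hstar \ F.image subdivEdge) : ShadowReach (pullback G t Hstar) F s c := by
  obtain ⟨hbcH, hbcF⟩ := Finset.mem_sdiff.mp hbc
  have te := mem_transGraph.mp (hsub hbcH)
  rcases b with a | ⟨⟨x, y⟩, _ | _⟩ | ⟨x, y, z⟩ <;>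
    rcases c with v | ⟨⟨x', y'⟩, _ | _⟩ | ⟨x', y', z'⟩ <;>
    simp only [transEdge] at te
  · obtain ⟨-, rfl, -⟩ := te
    exact .refl
  · obtain ⟨rfl, rfl, -⟩ := te
    exact ⟨hb, fun hF => hbcF (Finset.mem_image_of_mem _ hF)⟩
  · obtain ⟨rfl, rfl | rfl, hG⟩ := te
    · exact .refl
    · exact hb.1.tail (Finset.mem_sdiff.mpr ⟨mem_pullback.mpr ⟨hG, fun _ => hbcH⟩, hb.2⟩)
  · obtain ⟨rfl, rfl, -, hyt, hG, -⟩ := te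
    exact hb.1.tail (Finset.mem_sdiff.mpr ⟨mem_pullback.mpr ⟨hG, fun h => absurd h hyt⟩, hb.2⟩)
  · obtain ⟨rfl, rfl, -⟩ := te
    exact hb
  · obtain ⟨-, rfl, -⟩ := te
    exact hb

lemma reach_pullback_of_reach {Hstar : Finset (TW V × TW V)} (hsub : Hstar ⊆ transGraph G s t)
    (h : Reach (Hstar \ F.image subdivEdge) (Sum.inl s) (Sum.inl t)) :
    Reach (pullback G t Hstar \ F) s t := by
  suffices ∀ w, Reach (Hstar \ F.image subdivEdge) (Sum.inl s) w →
      ShadowReach (pullback G t Hstar) F s w from this _ h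
  intro w hw
  induction hw with
  | refl => exact .refl
  | tail _ hbc ih => exact shadowReach_step hsub ih hbc

lemma card_inEdges_pullback {Hstar : Finset (TW V × TW V)} (hsub : Hstar ⊆ transGraph G s t) :
    (inEdges (pullback G t Hstar) t).card = (inEdges Hstar (Sum.inl t)).card := by
  refine Finset.card_bij (fun e _ => (TW.r (e.1, t), Sum.inl t)) (fun e he => ?_)
    (fun e₁ he₁ e₂ he₂ h => ?_) (fun b hb => ?_)
  · obtain ⟨heG, het⟩ := Finset.mem_filter.mp he
    exact Finset.mem_filter.mpr ⟨(mem_pullback.mp heG).2 het, rfl⟩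
  · simp only [Prod.mk.injEq, Sum.inr.injEq, Sum.inl.injEq, and_true] at h
    exact Prod.ext h ((Finset.mem_filter.mp he₁).2.trans (Finset.mem_filter.mp he₂).2.symm)
  obtain ⟨hbH, hbt⟩ := Finset.mem_filter.mp hb
  obtain ⟨b, _⟩ := b
  subst hbt
  have te := mem_transGraph.mp (hsub hbH)
  rcases b with a | ⟨⟨x, y⟩, _ | _⟩ | ⟨x, y, z⟩ <;> simp only [transEdge] at te
  obtain ⟨rfl, -, hG⟩ := te
  exact ⟨(x, t), Finset.mem_filter.mpr ⟨mem_pullback.mpr ⟨hG, fun _ => hbH⟩, rfl⟩, rfl⟩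

lemma reach_pullback_of_isFTRS {Hstar : Finset (TW V × TW V)} {j : ℕ}
    (hH : IsFTRS (transGraph G s t) Hstar (Sum.inl s) j) (hF : F.card ≤ j)
    (h : Reach (G \ F) s t) : Reach (pullback G t Hstar \ F) s t :=
  reach_pullback_of_reach hH.1 <|
    (hH.2 _ (Finset.card_image_le.trans hF) _).mpr (reach_transGraph_of_reach h)

end Transformation

theorem stmt_13_general {V : Type*} [Fintype V] [LinearOrder V]
    (G : Finset (V × V)) (s t : V)
    (k f : ℕ)
    (Hstar : Finset (TW V × TW V))
    (hFTRS : IsFTRS (transGraph G s t) Hstar (Sum.inl s) (k + f - 1))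
    (Gstar : Finset (V × V))
    (hGstar : Gstar = G.filter fun e => e.2 = t →
        ((Sum.inr (Sum.inl ((e.1, t), true)) : TW V), (Sum.inl t : TW V)) ∈ Hstar) :
    IsFTRS G Gstar s (k + f - 1) ∧
    (inEdges Gstar t).card = (inEdges Hstar (Sum.inl t)).card := by
  obtain rfl : Gstar = pullback G t Hstar := hGstar
  refine ⟨⟨pullback_subset Hstar, fun F hF u => ⟨reach_mono ?_, ?_⟩⟩,
    card_inEdges_pullback hFTRS.1⟩
  · exact Finset.sdiff_subset_sdiff (pullback_subset Hstar) le_rfl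
  · exact reach_of_reach_target (fun _ => mem_pullback_sdiff_of_ne)
      (reach_pullback_of_isFTRS hFTRS hF)

/-- if `H*` is a `(k+f-1)`-FTRS of the transformed graph `H` of `G`
(where `f = maxflow(s,t,G)`), then the subgraph `G*` of `G` keeping an in-edge
`(w,t)` iff `(r_{w,t}, t) ∈ H*` (and keeping all other edges) is a `(k+f-1)`-FTRS
of `G`, and `t` has the same in-degree in `G*` and `H*`. -/
theorem stmt_13 {V : Type*} [Fintype V] [LinearOrder V]
    (G : Finset (V × V)) (s t : V) (hst : s ≠ t)
    (k f : ℕ) (hf : f = maxFlow G s t)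
    (Hstar : Finset (TW V × TW V))
    (hFTRS : IsFTRS (transGraph G s t) Hstar (Sum.inl s) (k + f - 1))
    (Gstar : Finset (V × V))
    (hGstar : Gstar = G.filter fun e => e.2 = t →
        ((Sum.inr (Sum.inl ((e.1, t), true)) : TW V), (Sum.inl t : TW V)) ∈ Hstar) :
    IsFTRS G Gstar s (k + f - 1) ∧
    (inEdges Gstar t).card = (inEdges Hstar (Sum.inl t)).card :=
  stmt_13_general G s t k f Hstar hFTRS Gstar hGstar
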